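/- arXiv:2209.10108 — 2 statements merged into one kernel-verified Lean document; each statement's English description precedes it below -/
import Mathlib

section
/- Let Ŵ^off = {(w_0,…,w_t) ∈ 𝕎^{t+1} : [H]_i Σ_{l=0}^{t} A_cl^{t-l} w_l ≤ γ} with P((w_0,…,w_t) ∈ Ŵ^off) ≥ 1 - α for the random disturbance sequence. If the inputs v_0,…,v_t satisfy [H]_i (A_cl^{t+1} x_0 + Σ_{l=0}^{t} A_cl^{t-l} B v_l) ≤ h_i - γ, then the closed-loop state x_{t+1} = A_cl^{t+1} x_0 + Σ_{l=0}^{t} A_cl^{t-l}(B v_l + w_l) satisfies P([H]_i x_{t+1} ≤ h_i) ≥ 1 - α. -/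
/-! The disturbance enters the closed-loop state linearly, so `Hi ⬝ᵥ x_{t+1}` is the nominal
prediction plus `Hi ⬝ᵥ ∑ Acl^(t-l) w_l`. Tightening the nominal constraint by `γ` therefore makes
every disturbance realisation in the offline set satisfy the state constraint, and the chance
constraint follows by monotonicity of the measure. -/

open MeasureTheory Matrix Finset

theorem Matrix.sum_mulVec_add {ι m n R : Type*} [Fintype n] [NonUnitalNonAssocSemiring R]
    (s : Finset ι) (M : ι → Matrix m n R) (u w : ι → n → R) :
    ∑ l ∈ s, M l *ᵥ (u l + w l) = ∑ l ∈ s, M l *ᵥ u l + ∑ l ∈ s, M l *ᵥ w l := by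
  simp only [mulVec_add, sum_add_distrib]

theorem MeasureTheory.measure_le_measure_add_le {Ω : Type*} [MeasurableSpace Ω] (μ : Measure Ω)
    {f : Ω → ℝ} {a c γ : ℝ} (h : a ≤ c - γ) :
    μ {ω | f ω ≤ γ} ≤ μ {ω | a + f ω ≤ c} :=
  measure_mono fun ω (hω : f ω ≤ γ) => show a + f ω ≤ c by linarith

theorem offline_robustness_implies_chance_constraint_general
    {Ω : Type*} [MeasurableSpace Ω] (μ : Measure Ω)
    (n m : ℕ) (Acl : Matrix (Fin n) (Fin n) ℝ) (B : Matrix (Fin n) (Fin m) ℝ)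
    (Hi : Fin n → ℝ) (hi γ α : ℝ) (t : ℕ)
    (w : ℕ → Ω → (Fin n → ℝ))
    (hoff : μ {ω | Hi ⬝ᵥ (∑ l ∈ Finset.range (t + 1),
        (Acl ^ (t - l)).mulVec (w l ω)) ≤ γ} ≥ 1 - ENNReal.ofReal α)
    (x0 : Fin n → ℝ) (v : ℕ → (Fin m → ℝ))
    (hrobust : Hi ⬝ᵥ ((Acl ^ (t + 1)).mulVec x0
        + ∑ l ∈ Finset.range (t + 1), (Acl ^ (t - l)).mulVec (B.mulVec (v l)))
      ≤ hi - γ) :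
    μ {ω | Hi ⬝ᵥ ((Acl ^ (t + 1)).mulVec x0
        + ∑ l ∈ Finset.range (t + 1),
            (Acl ^ (t - l)).mulVec (B.mulVec (v l) + w l ω)) ≤ hi}
      ≥ 1 - ENNReal.ofReal α := by
  simp only [Matrix.sum_mulVec_add, ← add_assoc, dotProduct_add] at hrobust ⊢
  exact hoff.trans (measure_le_measure_add_le μ hrobust)

theorem offline_robustness_implies_chance_constraint
    {Ω : Type*} [MeasurableSpace Ω] (μ : Measure Ω) [IsProbabilityMeasure μ]
    (n m : ℕ) (Acl : Matrix (Fin n) (Fin n) ℝ) (B : Matrix (Fin n) (Fin m) ℝ)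
    (Hi : Fin n → ℝ) (hi γ α : ℝ) (hα : 0 < α) (hα1 : α < 1)
    (Wset : Set (Fin n → ℝ)) (t : ℕ)
    (w : ℕ → Ω → (Fin n → ℝ)) (hsupp : ∀ l ω, w l ω ∈ Wset)
    (hoff : μ {ω | Hi ⬝ᵥ (∑ l ∈ Finset.range (t + 1),
        (Acl ^ (t - l)).mulVec (w l ω)) ≤ γ} ≥ 1 - ENNReal.ofReal α)
    (x0 : Fin n → ℝ) (v : ℕ → (Fin m → ℝ))
    (hrobust : Hi ⬝ᵥ ((Acl ^ (t + 1)).mulVec x0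
        + ∑ l ∈ Finset.range (t + 1), (Acl ^ (t - l)).mulVec (B.mulVec (v l)))
      ≤ hi - γ) :
    μ {ω | Hi ⬝ᵥ ((Acl ^ (t + 1)).mulVec x0
        + ∑ l ∈ Finset.range (t + 1),
            (Acl ^ (t - l)).mulVec (B.mulVec (v l) + w l ω)) ≤ hi}
      ≥ 1 - ENNReal.ofReal α :=
  offline_robustness_implies_chance_constraint_general μ n m Acl B Hi hi γ α t w hoff x0 v hrobust
end

section
/- Let the time-shifted terminal sets be X_F^t = {x ∈ ℝ^n : [H]_i A_cl^{l+1} x ≤ h_i - γ_{N+t+l,i} + [H]_i Σ_{j=0}^{t-1} A_cl^{N+t+l-j} w(j) for all l ∈ {0,…,L-t} and all i ∈ {1,…,p}}, so that X_F^0 = {x ∈ ℝ^n : [H]_i A_cl^{l+1} x ≤ h_i - γ_{N+l,i} for all l ∈ {0,…,L} and all i ∈ {1,…,p}}. Then for any t ≥ 1 and any w(0),…,w(t) ∈ ℝ^n, if x̄ ∈ X_F^t then A_cl x̄ + A_cl^N w(t) ∈ X_F^{t+1}. -/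
open Matrix Finset

theorem terminal_set_shift_invariance
    (n p N L : ℕ) (Acl : Matrix (Fin n) (Fin n) ℝ)
    (H : Fin p → (Fin n → ℝ)) (h : Fin p → ℝ) (γ : ℕ → Fin p → ℝ)
    (w : ℕ → (Fin n → ℝ))
    (XF : ℕ → Set (Fin n → ℝ))
    (hXF : ∀ t, XF t = {x | ∀ l : ℕ, l + t ≤ L → ∀ i : Fin p,
      H i ⬝ᵥ (Acl ^ (l + 1)).mulVec x
        ≤ h i - γ (N + t + l) i
          + H i ⬝ᵥ (∑ j ∈ Finset.range t, (Acl ^ (N + t + l - j)).mulVec (w j))})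
    (t : ℕ) (ht : 1 ≤ t) (xbar : Fin n → ℝ) (hx : xbar ∈ XF t) :
    Acl.mulVec xbar + (Acl ^ N).mulVec (w t) ∈ XF (t + 1) := by
  rw [hXF] at hx ⊢
  intro l hl i
  have h1 := hx (l + 1) (by omega) i
  have e3 : N + (t + 1) + l = N + t + (l + 1) := by omega
  have e1 : (Acl ^ (l + 1)).mulVec (Acl.mulVec xbar + (Acl ^ N).mulVec (w t))
      = (Acl ^ (l + 1 + 1)).mulVec xbar + (Acl ^ (N + l + 1)).mulVec (w t) := by
    have e4 : l + 1 + N = N + l + 1 := by omega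
    rw [Matrix.mulVec_add, Matrix.mulVec_mulVec, Matrix.mulVec_mulVec,
      ← pow_succ, ← pow_add, e4]
  have e5 : N + (t + 1) + l - t = N + l + 1 := by omega
  have e2 : ∑ j ∈ Finset.range (t + 1), (Acl ^ (N + (t + 1) + l - j)).mulVec (w j)
      = (∑ j ∈ Finset.range t, (Acl ^ (N + t + (l + 1) - j)).mulVec (w j))
        + (Acl ^ (N + l + 1)).mulVec (w t) := by
    rw [Finset.sum_range_succ, e5, e3]
  show H i ⬝ᵥ _ ≤ _
  rw [e1, e2, e3, dotProduct_add, dotProduct_add]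
  linarith
end
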